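/- Let ρ, φ : ℝ^N → ℝ be measurable with ‖ρ‖_{Hˢ_Ω} < ∞ and ‖φ‖_{Hˢ_Ω} < ∞, and assume that N_s ρ ∈ L²(ℝ^N ∖ Ω) and that the product (N_s ρ)·φ is integrable on ℝ^N ∖ Ω. Then |F_R(ρ, φ) − ∫_{ℝ^N ∖ Ω} (N_s ρ)(x) φ(x) dx| ≤ (F_R(ρ, ρ) + ‖N_s ρ‖²_{L²(ℝ^N ∖ Ω)})^{1/2} · ‖φ‖_{Hˢ_Ω}. -/

import Mathlib

/-!
Since `|x - y|^{N+2s}` is the square of `|x - y|^{(N+2s)/2}`, the kernel of `F_R` factors as a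
product `q_u q_v` of difference quotients, so `F_R(u, v) = (C_{N,s}/2) ⟨q_u, q_v⟩` in `L²` of the
cross region with `C_{N,s} > 0`, and Cauchy–Schwarz gives
`|F_R(ρ, φ)| ≤ F_R(ρ, ρ)^{1/2} F_R(φ, φ)^{1/2}`. Cauchy–Schwarz on `ℝ^N ∖ Ω` bounds the boundary
term by `‖N_s ρ‖_{L²(ℝ^N ∖ Ω)} ‖φ‖_{L²(ℝ^N)}`; the triangle inequality and Cauchy–Schwarz in `ℝ²`
combine the two bounds.
-/

open MeasureTheory Real Set

noncomputable section

/-- Euclidean space `ℝ^N`. -/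
abbrev E (N : ℕ) := EuclideanSpace ℝ (Fin N)

/-- The normalization constant `C_{N,s} = s·2^{2s}·Γ((N+2s)/2)/(π^{N/2}·Γ(1−s))`. -/
def CNs (N : ℕ) (s : ℝ) : ℝ :=
  s * (2 : ℝ) ^ (2 * s) * Real.Gamma (((N : ℝ) + 2 * s) / 2) /
    (Real.pi ^ ((N : ℝ) / 2) * Real.Gamma (1 - s))

/-- The Gagliardo kernel integrand `(u(x)−u(y))(v(x)−v(y))/|x−y|^{N+2s}`. -/
def kern (N : ℕ) (s : ℝ) (u v : E N → ℝ) (p : E N × E N) : ℝ :=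
  (u p.1 - u p.2) * (v p.1 - v p.2) / ‖p.1 - p.2‖ ^ ((N : ℝ) + 2 * s)

/-- The region `ℝ^{2N} ∖ ((ℝ^N∖Ω)×(ℝ^N∖Ω))`. -/
def crossRegion (N : ℕ) (Ω : Set (E N)) : Set (E N × E N) := (Ωᶜ ×ˢ Ωᶜ)ᶜ

/-- The restricted bilinear form `F_R(u,v)`. -/
def FR (N : ℕ) (s : ℝ) (Ω : Set (E N)) (u v : E N → ℝ) : ℝ :=
  (CNs N s / 2) * ∫ p in crossRegion N Ω, kern N s u v p

/-- The nonlocal normal derivative `N_s u(x) = C_{N,s} ∫_Ω (u(x)−u(y))/|x−y|^{N+2s} dy`. -/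
def Nder (N : ℕ) (s : ℝ) (Ω : Set (E N)) (u : E N → ℝ) (x : E N) : ℝ :=
  CNs N s * ∫ y in Ω, (u x - u y) / ‖x - y‖ ^ ((N : ℝ) + 2 * s)

namespace Real

theorem sqrt_mul_sqrt_add_sqrt_mul_sqrt_le {a b c d : ℝ} (ha : 0 ≤ a) (hb : 0 ≤ b) (hc : 0 ≤ c)
    (hd : 0 ≤ d) : √a * √b + √c * √d ≤ √(a + c) * √(b + d) := by
  rw [← sqrt_mul (add_nonneg ha hc)]
  apply le_sqrt_of_sq_le
  nlinarith [sq_nonneg (√a * √d - √c * √b), sq_sqrt ha, sq_sqrt hb, sq_sqrt hc, sq_sqrt hd]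

end Real

namespace MeasureTheory

variable {α : Type*} [MeasurableSpace α] {μ : Measure α} {f g : α → ℝ}

theorem abs_integral_mul_le_sqrt_mul_sqrt (hf : MemLp f 2 μ) (hg : MemLp g 2 μ) :
    |∫ x, f x * g x ∂μ| ≤ √(∫ x, f x ^ 2 ∂μ) * √(∫ x, g x ^ 2 ∂μ) := by
  have hf' : MemLp f (ENNReal.ofReal 2) μ := by simpa using hf
  have hg' : MemLp g (ENNReal.ofReal 2) μ := by simpa using hg
  have holder := integral_mul_norm_le_Lp_mul_Lq Real.HolderConjugate.two_two hf' hg'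
  simp only [norm_eq_abs, rpow_two, sq_abs, ← sqrt_eq_rpow] at holder
  calc |∫ x, f x * g x ∂μ| ≤ ∫ x, |f x| * |g x| ∂μ := by
        simpa only [norm_eq_abs, abs_mul] using norm_integral_le_integral_norm (fun x ↦ f x * g x)
    _ ≤ _ := holder

theorem abs_const_mul_integral_mul_le {c : ℝ} (hc : 0 ≤ c) (hf : MemLp f 2 μ) (hg : MemLp g 2 μ) :
    |c * ∫ x, f x * g x ∂μ| ≤ √(c * ∫ x, f x ^ 2 ∂μ) * √(c * ∫ x, g x ^ 2 ∂μ) := by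
  rw [abs_mul, abs_of_nonneg hc, sqrt_mul hc, sqrt_mul hc,
    mul_mul_mul_comm, mul_self_sqrt hc]
  exact mul_le_mul_of_nonneg_left (abs_integral_mul_le_sqrt_mul_sqrt hf hg) hc

theorem abs_setIntegral_mul_le_sqrt_mul_sqrt {S : Set α} (hf : MemLp f 2 (μ.restrict S))
    (hg : MemLp g 2 μ) :
    |∫ x in S, f x * g x ∂μ| ≤ √(∫ x in S, f x ^ 2 ∂μ) * √(∫ x, g x ^ 2 ∂μ) := by
  have hg2 : Integrable (fun x ↦ g x ^ 2) μ :=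
    (memLp_two_iff_integrable_sq hg.aestronglyMeasurable).1 hg
  refine (abs_integral_mul_le_sqrt_mul_sqrt hf (hg.restrict S)).trans ?_
  gcongr 2
  exact setIntegral_le_integral hg2 (.of_forall fun x ↦ sq_nonneg (g x))

end MeasureTheory

theorem CNs_pos (N : ℕ) {s : ℝ} (hs0 : 0 < s) (hs1 : s < 1) : 0 < CNs N s := by
  have hΓ₁ : 0 < Gamma (((N : ℝ) + 2 * s) / 2) := Gamma_pos_of_pos (by positivity)
  have hΓ₂ : 0 < Gamma (1 - s) := Gamma_pos_of_pos (by linarith)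
  unfold CNs
  positivity

def diffQuotient (N : ℕ) (s : ℝ) (u : E N → ℝ) (p : E N × E N) : ℝ :=
  (u p.1 - u p.2) / ‖p.1 - p.2‖ ^ (((N : ℝ) + 2 * s) / 2)

theorem kern_eq_diffQuotient_mul (N : ℕ) (s : ℝ) (u v : E N → ℝ) :
    kern N s u v = fun p ↦ diffQuotient N s u p * diffQuotient N s v p := by
  funext p
  have hpow : ‖p.1 - p.2‖ ^ ((N : ℝ) + 2 * s) = (‖p.1 - p.2‖ ^ (((N : ℝ) + 2 * s) / 2)) ^ 2 := by
    rw [← rpow_natCast, ← rpow_mul (norm_nonneg _)]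
    norm_num
  rw [kern, diffQuotient, diffQuotient, hpow]
  ring

theorem kern_self_eq_diffQuotient_sq (N : ℕ) (s : ℝ) (u : E N → ℝ) :
    kern N s u u = fun p ↦ diffQuotient N s u p ^ 2 := by
  simp only [kern_eq_diffQuotient_mul, sq]

theorem measurable_diffQuotient (N : ℕ) (s : ℝ) {u : E N → ℝ} (hu : Measurable u) :
    Measurable (diffQuotient N s u) :=
  ((hu.comp measurable_fst).sub (hu.comp measurable_snd)).div
    ((measurable_fst.sub measurable_snd).norm.pow_const _)

theorem memLp_two_diffQuotient {N : ℕ} {s : ℝ} {u : E N → ℝ} {S : Set (E N × E N)}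
    (hu : Measurable u) (huF : IntegrableOn (kern N s u u) S) :
    MemLp (diffQuotient N s u) 2 (volume.restrict S) := by
  rwa [memLp_two_iff_integrable_sq (measurable_diffQuotient N s hu).aestronglyMeasurable,
    ← kern_self_eq_diffQuotient_sq]

theorem FR_self_nonneg {N : ℕ} {s : ℝ} (hC : 0 ≤ CNs N s) (Ω : Set (E N)) (u : E N → ℝ) :
    0 ≤ FR N s Ω u u := by
  rw [FR, kern_self_eq_diffQuotient_sq]
  have : 0 ≤ ∫ p in crossRegion N Ω, diffQuotient N s u p ^ 2 :=
    integral_nonneg fun p ↦ sq_nonneg _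
  positivity

theorem abs_FR_le_sqrt_mul_sqrt {N : ℕ} {s : ℝ} (hC : 0 ≤ CNs N s) (Ω : Set (E N))
    {u v : E N → ℝ} (hu : Measurable u) (hv : Measurable v)
    (huF : IntegrableOn (kern N s u u) (crossRegion N Ω))
    (hvF : IntegrableOn (kern N s v v) (crossRegion N Ω)) :
    |FR N s Ω u v| ≤ √(FR N s Ω u u) * √(FR N s Ω v v) := by
  simp only [FR, kern_self_eq_diffQuotient_sq, kern_eq_diffQuotient_mul]
  exact abs_const_mul_integral_mul_le (by linarith) (memLp_two_diffQuotient hu huF)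
    (memLp_two_diffQuotient hv hvF)

theorem FR_Nder_bound_general (N : ℕ) (s : ℝ) (hs0 : 0 < s) (hs1 : s < 1)
    (Ω : Set (E N))
    (ρ φ : E N → ℝ) (hρm : Measurable ρ) (hφm : Measurable φ)
    (hρF : IntegrableOn (kern N s ρ ρ) (crossRegion N Ω))
    (hφ2 : Integrable (fun x => φ x ^ 2))
    (hφF : IntegrableOn (kern N s φ φ) (crossRegion N Ω))
    (hNρ : MemLp (Nder N s Ω ρ) 2 (volume.restrict Ωᶜ)) :
    |FR N s Ω ρ φ - ∫ x in Ωᶜ, Nder N s Ω ρ x * φ x| ≤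
      Real.sqrt (FR N s Ω ρ ρ + ∫ x in Ωᶜ, (Nder N s Ω ρ x) ^ 2) *
        Real.sqrt ((∫ x, φ x ^ 2) + FR N s Ω φ φ) := by
  have hC := (CNs_pos N hs0 hs1).le
  have hφ : MemLp φ 2 volume := (memLp_two_iff_integrable_sq hφm.aestronglyMeasurable).2 hφ2
  calc |FR N s Ω ρ φ - ∫ x in Ωᶜ, Nder N s Ω ρ x * φ x|
      ≤ |FR N s Ω ρ φ| + |∫ x in Ωᶜ, Nder N s Ω ρ x * φ x| := abs_sub _ _
    _ ≤ √(FR N s Ω ρ ρ) * √(FR N s Ω φ φ) +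
        √(∫ x in Ωᶜ, Nder N s Ω ρ x ^ 2) * √(∫ x, φ x ^ 2) :=
      add_le_add (abs_FR_le_sqrt_mul_sqrt hC Ω hρm hφm hρF hφF)
        (abs_setIntegral_mul_le_sqrt_mul_sqrt hNρ hφ)
    _ ≤ _ := by
      rw [add_comm (∫ x, φ x ^ 2)]
      exact sqrt_mul_sqrt_add_sqrt_mul_sqrt_le (FR_self_nonneg hC Ω ρ) (FR_self_nonneg hC Ω φ)
        (integral_nonneg fun x ↦ sq_nonneg _) (integral_nonneg fun x ↦ sq_nonneg _)

/-- Cauchy–Schwarz type bound for `F_R(ρ,φ) − ∫_{ℝ^N∖Ω} (N_s ρ) φ`. -/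
theorem FR_Nder_bound (N : ℕ) (s : ℝ) (hN : 1 ≤ N) (hs0 : 0 < s) (hs1 : s < 1)
    (Ω : Set (E N)) (hΩne : Ω.Nonempty) (hΩo : IsOpen Ω) (hΩb : Bornology.IsBounded Ω)
    (ρ φ : E N → ℝ) (hρm : Measurable ρ) (hφm : Measurable φ)
    (hρ2 : Integrable (fun x => ρ x ^ 2))
    (hρF : IntegrableOn (kern N s ρ ρ) (crossRegion N Ω))
    (hφ2 : Integrable (fun x => φ x ^ 2))
    (hφF : IntegrableOn (kern N s φ φ) (crossRegion N Ω))
    (hNρ : MemLp (Nder N s Ω ρ) 2 (volume.restrict Ωᶜ))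
    (hNρφ : IntegrableOn (fun x => Nder N s Ω ρ x * φ x) Ωᶜ) :
    |FR N s Ω ρ φ - ∫ x in Ωᶜ, Nder N s Ω ρ x * φ x| ≤
      Real.sqrt (FR N s Ω ρ ρ + ∫ x in Ωᶜ, (Nder N s Ω ρ x) ^ 2) *
        Real.sqrt ((∫ x, φ x ^ 2) + FR N s Ω φ φ) :=
  FR_Nder_bound_general N s hs0 hs1 Ω ρ φ hρm hφm hρF hφ2 hφF hNρ
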